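/- arXiv:0911.1671 — 3 statements merged into one kernel-verified Lean document; each statement's English description precedes it below -/
import Mathlib

section
/- Let Q be a monic polynomial with real simple zeros, and let z be a zero of Q. Suppose E⁰ is a critical point of Q with z < E⁰ and no zeros or critical points of Q in (z, E⁰), and E⁰ is a local maximum of Q with Q > 0 on (z, E⁰]. Then for all E in (z, E⁰], e·|Q(E)/(E - z)| ≥ |Q'(z)|. -/
/-!
Write `Q = (X - z) * P`, so that `Q'(z) = P(z)` and `Q(E) / (E - z) = P(E)`. The logarithmic
derivative `P'/P = ∑ 1/(t - r)` over the roots `r` of `P` decreases on any interval free of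
roots, and the critical point condition says `P'(E⁰)/P(E⁰) = -1/(E⁰ - z)`. Hence
`P' + P/(E⁰ - z) ≥ 0` on `(z, E⁰)`, so `t ↦ P(t) exp(t/(E⁰ - z))` is monotone there, which gives
`P(z) ≤ exp((E - z)/(E⁰ - z)) P(E) ≤ e P(E)`.
-/

open Polynomial Set Real

theorem Polynomial.Splits.eval_derivative_div_eval_le {P : ℝ[X]} (hP : P.Splits)
    {t u : ℝ} (htu : t ≤ u) (hne : ∀ x ∈ Icc t u, P.eval x ≠ 0) :
    P.derivative.eval u / P.eval u ≤ P.derivative.eval t / P.eval t := by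
  rw [hP.eval_derivative_div_eval_of_ne_zero (hne u ⟨htu, le_rfl⟩),
    hP.eval_derivative_div_eval_of_ne_zero (hne t ⟨le_rfl, htu⟩)]
  refine Multiset.sum_map_le_sum_map _ _ fun r hr => ?_
  have hr : r ∉ Icc t u := fun h => hne r h (mem_roots'.mp hr).2
  rcases lt_or_ge r t with hrt | htr
  · exact one_div_le_one_div_of_le (sub_pos.2 hrt) (by linarith)
  · have hur : u < r := not_le.mp fun hru => hr ⟨htr, hru⟩
    exact one_div_le_one_div_of_neg_of_le (sub_neg.2 hur) (by linarith)

theorem le_exp_mul_of_deriv_add_mul_nonneg {f f' : ℝ → ℝ} {a b k : ℝ} (hab : a ≤ b)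
    (hf : ContinuousOn f (Icc a b)) (hf' : ∀ t ∈ Ioo a b, HasDerivAt f (f' t) t)
    (h : ∀ t ∈ Ioo a b, 0 ≤ f' t + k * f t) :
    f a ≤ exp (k * (b - a)) * f b := by
  have hmono : MonotoneOn (fun x => f x * exp (k * x)) (Icc a b) := by
    refine monotoneOn_of_hasDerivWithinAt_nonneg (f' := fun t => (f' t + k * f t) * exp (k * t))
      (convex_Icc a b) (hf.mul (by fun_prop)) (fun t ht => ?_) (fun t ht => ?_)
    · rw [interior_Icc] at ht
      have hexp : HasDerivAt (fun x => exp (k * x)) (exp (k * t) * k) t := by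
        simpa using ((hasDerivAt_id t).const_mul k).exp
      exact (((hf' t ht).mul hexp).congr_deriv (by ring)).hasDerivWithinAt
    · rw [interior_Icc] at ht
      exact mul_nonneg (h t ht) (exp_pos _).le
  have hab' := hmono ⟨le_rfl, hab⟩ ⟨hab, le_rfl⟩ hab
  rw [mul_sub, exp_sub, ← mul_div_right_comm, le_div_iff₀ (exp_pos _)]
  linarith

theorem Polynomial.Splits.eval_le_exp_one_mul_eval {P : ℝ[X]} (hP : P.Splits) {c E0 E : ℝ}
    (hpos : ∀ t ∈ Ioc c E0, 0 < P.eval t)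
    (hcrit : P.eval E0 + (E0 - c) * P.derivative.eval E0 = 0) (hE : E ∈ Ioc c E0) :
    P.eval c ≤ exp 1 * P.eval E := by
  have hd : 0 < E0 - c := sub_pos.2 (hE.1.trans_le hE.2)
  have hPE0 := hpos E0 ⟨hE.1.trans_le hE.2, le_rfl⟩
  have hlogE0 : P.derivative.eval E0 / P.eval E0 = -(E0 - c)⁻¹ := by
    field_simp
    linarith
  have hdiff : ∀ t ∈ Ioo c E, 0 ≤ P.derivative.eval t + (E0 - c)⁻¹ * P.eval t := by
    intro t ht
    have hPt := hpos t ⟨ht.1, ht.2.le.trans hE.2⟩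
    have hlog := hP.eval_derivative_div_eval_le (ht.2.le.trans hE.2)
      fun x hx => (hpos x ⟨ht.1.trans_le hx.1, hx.2⟩).ne'
    rw [hlogE0, le_div_iff₀ hPt] at hlog
    linarith
  calc P.eval c
      ≤ exp ((E0 - c)⁻¹ * (E - c)) * P.eval E :=
        le_exp_mul_of_deriv_add_mul_nonneg hE.1.le P.continuous.continuousOn
          (fun t _ => P.hasDerivAt t) hdiff
    _ ≤ exp 1 * P.eval E := by
        gcongr
        · exact (hpos E hE).le
        · rw [inv_mul_le_one₀ hd]
          linarith [hE.2]

theorem stmt1_general (q : ℕ) (z : Fin q → ℝ)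
    (Q : Polynomial ℝ) (hQ : Q = ∏ j : Fin q, (X - C (z j)))
    (j0 : Fin q) (E0 : ℝ)
    (hcrit : Q.derivative.eval E0 = 0)
    (hpos : ∀ x ∈ Set.Ioc (z j0) E0, 0 < Q.eval x) :
    ∀ E ∈ Set.Ioc (z j0) E0,
      Real.exp 1 * |Q.eval E / (E - z j0)| ≥ |Q.derivative.eval (z j0)| := by
  intro E hE
  set c := z j0
  set P := ∏ j ∈ Finset.univ.erase j0, (X - C (z j))
  have hP : P.Splits := Splits.prod fun j _ => Splits.X_sub_C (z j)
  have hQP : Q = (X - C c) * P := by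
    rw [hQ, ← Finset.mul_prod_erase _ _ (Finset.mem_univ j0)]
  have hQ_eval (t : ℝ) : Q.eval t = (t - c) * P.eval t := by simp [hQP]
  have hQ'_eval (t : ℝ) : Q.derivative.eval t = P.eval t + (t - c) * P.derivative.eval t := by
    simp [hQP, derivative_mul]
  have hPpos : ∀ t ∈ Ioc c E0, 0 < P.eval t := fun t ht =>
    pos_of_mul_pos_right (hQ_eval t ▸ hpos t ht) (sub_pos.2 ht.1).le
  have hPc : 0 ≤ P.eval c :=
    closure_minimal (fun t ht => (hPpos t ht).le) (isClosed_le continuous_const P.continuous)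
      (by rw [closure_Ioc (hE.1.trans_le hE.2).ne]; exact left_mem_Icc.2 (hE.1.le.trans hE.2))
  rw [hQ'_eval, hQ_eval, sub_self, zero_mul, add_zero, mul_div_cancel_left₀ _ (sub_pos.2 hE.1).ne',
    abs_of_nonneg hPc, abs_of_pos (hPpos E hE)]
  exact hP.eval_le_exp_one_mul_eval hPpos (hQ'_eval E0 ▸ hcrit) hE

/-- If `Q` is monic with real simple zeros, `z j0` is a zero, `E0 > z j0` is a
critical point of `Q` which is a local maximum, with no zeros or critical points of `Q` in
`(z j0, E0)` and `Q > 0` on `(z j0, E0]`, then for all `E ∈ (z j0, E0]`,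
`e * |Q(E)/(E - z j0)| ≥ |Q'(z j0)|`. -/
theorem stmt1 (q : ℕ) (z : Fin q → ℝ) (hz : Function.Injective z)
    (Q : Polynomial ℝ) (hQ : Q = ∏ j : Fin q, (X - C (z j)))
    (j0 : Fin q) (E0 : ℝ)
    (hlt : z j0 < E0)
    (hcrit : Q.derivative.eval E0 = 0)
    (hmax : IsLocalMax (fun x => Q.eval x) E0)
    (hno : ∀ x ∈ Set.Ioo (z j0) E0, Q.eval x ≠ 0 ∧ Q.derivative.eval x ≠ 0)
    (hpos : ∀ x ∈ Set.Ioc (z j0) E0, 0 < Q.eval x) :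
    ∀ E ∈ Set.Ioc (z j0) E0,
      Real.exp 1 * |Q.eval E / (E - z j0)| ≥ |Q.derivative.eval (z j0)| :=
  stmt1_general q z Q hQ j0 E0 hcrit hpos
end

section
/- Suppose t > 0 and b_ℓ, b_r > 0 satisfy both b_ℓ > t·b_r/(b_ℓ + b_r) and b_r > t·b_ℓ/(b_ℓ + b_r), and at least one of b_ℓ ≥ t or b_r ≥ t holds. Then b_ℓ + b_r ≥ ((√5 + 1)/2)·t. -/
/-! Suppose `b_r ≥ t`. If `b_ℓ ≥ t` the sum is at least `2t`. Otherwise the first inequality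
`b_ℓ (b_ℓ + b_r) > t b_r` rearranges to `b_ℓ² > b_r (t - b_ℓ) ≥ t (t - b_ℓ)`, and the positive root
of `x² + t x - t²` is `(φ - 1) t`, so `b_ℓ > (φ - 1) t` and `b_ℓ + b_r > φ t`. The case `b_ℓ ≥ t`
is symmetric. -/

open Real goldenRatio

namespace Real

lemma goldenRatio_sub_one_mul_lt_of_sq_lt {a t : ℝ} (ht : 0 ≤ t) (ha : 0 < a)
    (h : t ^ 2 < a ^ 2 + t * a) : (φ - 1) * t < a := by
  have hfactor : (a - (φ - 1) * t) * (a + φ * t) = a ^ 2 + t * a - t ^ 2 := by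
    -- `ring` unfolds `φ`, so `φ ^ 2 = φ + 1` enters as `√5 ^ 2 = 5`
    linear_combination -t ^ 2 / 4 * sq_sqrt (by norm_num : (0 : ℝ) ≤ 5)
  have hpos : 0 < a + φ * t := by positivity
  have hgap : 0 < a - (φ - 1) * t := pos_of_mul_pos_left (by linarith) hpos.le
  linarith

lemma goldenRatio_mul_le_add_of_le_of_div_lt {a b t : ℝ} (ht : 0 ≤ t) (ha : 0 < a)
    (htb : t ≤ b) (h : t * b / (a + b) < a) : φ * t ≤ a + b := by
  have hmul : t * b < a * (a + b) := (div_lt_iff₀ (by linarith)).mp h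
  rcases le_or_gt t a with hta | hat
  · nlinarith [goldenRatio_lt_two]
  · have hsq : t ^ 2 < a ^ 2 + t * a := by nlinarith
    linarith [goldenRatio_sub_one_mul_lt_of_sq_lt ht ha hsq]

end Real

/-- If `t > 0`, `bl, br > 0` satisfy both `bl > t·br/(bl+br)` and
`br > t·bl/(bl+br)`, and at least one of `bl ≥ t`, `br ≥ t` holds, then
`bl + br ≥ ((√5 + 1)/2)·t`. -/
theorem stmt4 (t bl br : ℝ) (ht : 0 < t) (hbl : 0 < bl) (hbr : 0 < br)
    (h1 : bl > t * br / (bl + br)) (h2 : br > t * bl / (bl + br))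
    (h3 : bl ≥ t ∨ br ≥ t) :
    bl + br ≥ ((Real.sqrt 5 + 1) / 2) * t := by
  rw [show (√5 + 1) / 2 = φ by rw [goldenRatio, add_comm]]
  rcases h3 with htl | htr
  · rw [add_comm] at h2 ⊢
    exact goldenRatio_mul_le_add_of_le_of_div_lt ht.le hbr htl h2
  · exact goldenRatio_mul_le_add_of_le_of_div_lt ht.le hbl htr h1
end

section
/- Let Q be a monic polynomial with real simple zeros, let Ê be a real number with |Q(Ê)| = 2, and let δ > 0. Suppose all zeros of Q lying outside an interval I ∋ Ê are at distance greater than d > 4δ to the right of Ê, that I has length at most δ, that I contains N ≥ 1 zeros of Q including z(Ê), and |Ê - z(Ê)| = b > 0. Then |Q(Ê + 4δ)| ≥ (2·(3δ)/b)·3^(N-1)·(1 - 4δ/d)^(q - N), where q = deg Q. -/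
open Polynomial Finset

/-! Factor `|Q(Ê + 4δ)| / |Q(Ê)|` over the roots. A root `z` within `δ` of `Ê` satisfies
`|Ê + 4δ - z| ≥ 3δ`, which is `≥ 3 |Ê - z|` in general and `= (3δ/b) |Ê - z(Ê)|` for the
distinguished root; a root `z > Ê + d` loses at most the factor `1 - 4δ/d`. -/

theorem abs_eval_prod_X_sub_C {ι : Type*} (s : Finset ι) (z : ι → ℝ) (x : ℝ) :
    |(∏ j ∈ s, (X - C (z j))).eval x| = ∏ j ∈ s, |x - z j| := by
  simp [eval_prod, abs_prod]

theorem pow_card_mul_prod_le_prod {ι R : Type*} [CommMonoidWithZero R] [Preorder R]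
    [ZeroLEOneClass R] [PosMulMono R] {s : Finset ι} {f g : ι → R} {r : R} (hr : 0 ≤ r)
    (hf : ∀ j ∈ s, 0 ≤ f j) (h : ∀ j ∈ s, r * f j ≤ g j) :
    r ^ #s * ∏ j ∈ s, f j ≤ ∏ j ∈ s, g j := by
  rw [pow_card_mul_prod]
  exact prod_le_prod (fun j hj => mul_nonneg hr (hf j hj)) h

theorem three_mul_le_abs_add_four_mul_sub {x z δ : ℝ} (h : |x - z| ≤ δ) :
    3 * δ ≤ |x + 4 * δ - z| := by
  have := (abs_le.mp h).1
  exact le_abs.mpr (Or.inl (by linarith))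

theorem one_sub_div_mul_abs_sub_le {x z t d : ℝ} (ht : 0 ≤ t) (htd : t < d) (hz : x + d < z) :
    (1 - t / d) * |x - z| ≤ |x + t - z| := by
  have hd : 0 < d := ht.trans_lt htd
  rw [abs_sub_comm, abs_of_pos (by linarith), abs_sub_comm, abs_of_pos (by linarith)]
  have : t ≤ t / d * (z - x) := by
    rw [div_mul_eq_mul_div, le_div_iff₀ hd]
    exact mul_le_mul_of_nonneg_left (by linarith) ht
  linarith

theorem le_prod_abs_add_four_mul_sub {ι : Type*} [Fintype ι] [DecidableEq ι] (s : Finset ι)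
    (z : ι → ℝ) {x δ d : ℝ} (hδ : 0 ≤ δ) (hd : 4 * δ < d) {j₀ : ι} (hj₀ : j₀ ∈ s)
    (hx : x ≠ z j₀) (hnear : ∀ j ∈ s, |x - z j| ≤ δ) (hfar : ∀ j ∉ s, x + d < z j) :
    3 * δ / |x - z j₀| * 3 ^ (#s - 1) * (1 - 4 * δ / d) ^ #sᶜ * ∏ j, |x - z j| ≤
      ∏ j, |x + 4 * δ - z j| := by
  have hr : 0 ≤ 1 - 4 * δ / d := by
    rw [sub_nonneg, div_le_one (by linarith)]; exact hd.le
  have hfirst : 3 * δ / |x - z j₀| * |x - z j₀| ≤ |x + 4 * δ - z j₀| := by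
    rw [div_mul_cancel₀ _ (abs_pos.mpr (sub_ne_zero.mpr hx)).ne']
    exact three_mul_le_abs_add_four_mul_sub (hnear j₀ hj₀)
  have hrest :
      3 ^ (#s - 1) * ∏ j ∈ s.erase j₀, |x - z j| ≤ ∏ j ∈ s.erase j₀, |x + 4 * δ - z j| := by
    rw [← card_erase_of_mem hj₀]
    refine pow_card_mul_prod_le_prod (by norm_num) (fun j _ => abs_nonneg _) fun j hj => ?_
    have hj := hnear j (mem_of_mem_erase hj)
    linarith [three_mul_le_abs_add_four_mul_sub hj]
  have hcompl : (1 - 4 * δ / d) ^ #sᶜ * ∏ j ∈ sᶜ, |x - z j| ≤ ∏ j ∈ sᶜ, |x + 4 * δ - z j| :=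
    pow_card_mul_prod_le_prod hr (fun j _ => abs_nonneg _)
      fun j hj => one_sub_div_mul_abs_sub_le (by positivity) hd (hfar j (mem_compl.mp hj))
  calc 3 * δ / |x - z j₀| * 3 ^ (#s - 1) * (1 - 4 * δ / d) ^ #sᶜ * ∏ j, |x - z j|
      = (3 * δ / |x - z j₀| * |x - z j₀|) * (3 ^ (#s - 1) * ∏ j ∈ s.erase j₀, |x - z j|) *
          ((1 - 4 * δ / d) ^ #sᶜ * ∏ j ∈ sᶜ, |x - z j|) := by
        rw [← prod_mul_prod_compl s, ← mul_prod_erase s _ hj₀]; ring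
    _ ≤ |x + 4 * δ - z j₀| * (∏ j ∈ s.erase j₀, |x + 4 * δ - z j|) *
          ∏ j ∈ sᶜ, |x + 4 * δ - z j| := by
        gcongr
    _ = ∏ j, |x + 4 * δ - z j| := by
        rw [← prod_mul_prod_compl s, ← mul_prod_erase s _ hj₀]

theorem stmt7_general (q : ℕ) (z : Fin q → ℝ)
    (Q : Polynomial ℝ) (hQ : Q = ∏ j : Fin q, (X - C (z j)))
    (Ehat : ℝ) (hE2 : |Q.eval Ehat| = 2)
    (δ d : ℝ) (hδ : 0 < δ) (hd : 4 * δ < d)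
    (a b : ℝ) (hlen : b - a ≤ δ) (hEI : Ehat ∈ Set.Icc a b)
    (j0 : Fin q) (hj0 : z j0 ∈ Set.Icc a b)
    (bb : ℝ) (hbb : |Ehat - z j0| = bb) (hbbpos : 0 < bb)
    (hout : ∀ j : Fin q, z j ∉ Set.Icc a b → Ehat + d < z j)
    (N : ℕ) (hN : N = (Finset.univ.filter (fun j => z j ∈ Set.Icc a b)).card) :
    |Q.eval (Ehat + 4 * δ)| ≥
      2 * (3 * δ) / bb * 3 ^ (N - 1) * (1 - 4 * δ / d) ^ (q - N) := by
  set S := Finset.univ.filter (fun j => z j ∈ Set.Icc a b)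
  have hnear : ∀ j ∈ S, |Ehat - z j| ≤ δ := fun j hj => by
    have hzj := (mem_filter.mp hj).2
    exact abs_sub_le_iff.mpr ⟨by linarith [hzj.1, hEI.2], by linarith [hzj.2, hEI.1]⟩
  have hfar : ∀ j ∉ S, Ehat + d < z j := fun j hj =>
    hout j fun h => hj (mem_filter.mpr ⟨mem_univ _, h⟩)
  have hx : Ehat ≠ z j0 := fun h => by rw [h, sub_self, abs_zero] at hbb; linarith
  have key := le_prod_abs_add_four_mul_sub S z hδ.le hd (mem_filter.mpr ⟨mem_univ _, hj0⟩) hx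
    hnear hfar
  rw [hbb, card_compl, Fintype.card_fin, ← hN] at key
  rw [ge_iff_le, hQ, abs_eval_prod_X_sub_C]
  calc 2 * (3 * δ) / bb * 3 ^ (N - 1) * (1 - 4 * δ / d) ^ (q - N)
      = 3 * δ / bb * 3 ^ (N - 1) * (1 - 4 * δ / d) ^ (q - N) * ∏ j, |Ehat - z j| := by
        rw [← abs_eval_prod_X_sub_C, ← hQ, hE2]; ring
    _ ≤ _ := key

/-- `Q` monic of degree `q` with real simple zeros, `|Q(Ê)| = 2`, `δ > 0`,
`d > 4δ`; the interval `I = [a,b]` has length at most `δ`, contains `Ê` and `N ≥ 1` zeros of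
`Q`, including `z j0` with `|Ê - z j0| = bb > 0`; all zeros outside `I` lie at distance
greater than `d` to the right of `Ê`. Then
`|Q(Ê + 4δ)| ≥ 2·(3δ)/bb · 3^(N-1) · (1 - 4δ/d)^(q - N)`. -/
theorem stmt7 (q : ℕ) (z : Fin q → ℝ) (hz : Function.Injective z)
    (Q : Polynomial ℝ) (hQ : Q = ∏ j : Fin q, (X - C (z j)))
    (Ehat : ℝ) (hE2 : |Q.eval Ehat| = 2)
    (δ d : ℝ) (hδ : 0 < δ) (hd : 4 * δ < d)
    (a b : ℝ) (hlen : b - a ≤ δ) (hEI : Ehat ∈ Set.Icc a b)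
    (j0 : Fin q) (hj0 : z j0 ∈ Set.Icc a b)
    (bb : ℝ) (hbb : |Ehat - z j0| = bb) (hbbpos : 0 < bb)
    (hout : ∀ j : Fin q, z j ∉ Set.Icc a b → Ehat + d < z j)
    (N : ℕ) (hN : N = (Finset.univ.filter (fun j => z j ∈ Set.Icc a b)).card)
    (hN1 : 1 ≤ N) :
    |Q.eval (Ehat + 4 * δ)| ≥
      2 * (3 * δ) / bb * 3 ^ (N - 1) * (1 - 4 * δ / d) ^ (q - N) :=
  stmt7_general q z Q hQ Ehat hE2 δ d hδ hd a b hlen hEI j0 hj0 bb hbb hbbpos hout N hN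
end
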